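/- Let λ = P + U_2 P^{−1} + U_3 P^{−2} + ⋯ be a Laurent series in P^{−1} with smooth coefficients, φ(T) a smooth function independent of P, and μ := e^{−ad φ}λ. Let A be any Laurent series, let ρ(T) be a smooth function independent of P with ∂_X ρ = res{A, λ}, and set C := e^{−ad φ}A + P^{−1}ρ and B := μ·{μ, C}_{≥−1} − {μ, (μ C)_{≥1}}. Then e^{ad φ}B + { (e^{−ad φ}(λ A))_0, λ } = λ·{λ, A}_+ − {λ, (λ A)_+}. (This says the Miura map carries the second Hamiltonian structure J^{(2)} of dmKP to the second Hamiltonian structure Θ^{(2)} of dKP: Θ^{(2)} = G′ J^{(2)} G′^†.) -/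

import Mathlib

namespace DMKP

/-- Coefficient functions of a formal Laurent series in `P⁻¹` with time variables
`T = (T₁, …, T_N)`: `A n` is the coefficient of `P^n`. -/
abbrev Coeffs (N : ℕ) := ℤ → (Fin N → ℝ) → ℝ

variable {N : ℕ}

/-- Partial derivative in the direction of the `q`-th time variable. -/
noncomputable def pd (q : Fin N) (f : (Fin N → ℝ) → ℝ) : (Fin N → ℝ) → ℝ :=
  fun x => fderiv ℝ f x (Pi.single q 1)

/-- Finitely many positive powers of `P`. -/
def BddPow (A : Coeffs N) : Prop := ∃ m : ℤ, ∀ n : ℤ, m < n → A n = 0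

/-- All coefficients are smooth functions of the time variables. -/
def SmoothCoeffs (A : Coeffs N) : Prop := ∀ n : ℤ, ContDiff ℝ (⊤ : ℕ∞) (A n)

/-- A Laurent series in `P⁻¹` with smooth coefficients. -/
def IsLaurent (A : Coeffs N) : Prop := BddPow A ∧ SmoothCoeffs A

/-- Termwise `∂_P`. -/
def dP (A : Coeffs N) : Coeffs N := fun n x => ((n + 1 : ℤ) : ℝ) * A (n + 1) x

/-- Termwise `∂_{T_q}`. -/
noncomputable def dT (q : Fin N) (A : Coeffs N) : Coeffs N := fun n => pd q (A n)

/-- Termwise `∂_X`, where `X = T₁`. -/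
noncomputable def dX [NeZero N] (A : Coeffs N) : Coeffs N := dT 0 A

/-- Termwise product of Laurent series. -/
noncomputable def mul (A B : Coeffs N) : Coeffs N := fun n x => ∑' i : ℤ, A i x * B (n - i) x

/-- The Poisson bracket `{f,g} = f_P g_X - f_X g_P`. -/
noncomputable def pb [NeZero N] (A B : Coeffs N) : Coeffs N :=
  fun n x => mul (dP A) (dX B) n x - mul (dX A) (dP B) n x

/-- Truncation keeping only powers `P^n` with `n ≥ k`. -/
def truncGe (k : ℤ) (A : Coeffs N) : Coeffs N := fun n => if k ≤ n then A n else 0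

/-- Truncation keeping only powers `P^n` with `n ≤ k`. -/
def truncLe (k : ℤ) (A : Coeffs N) : Coeffs N := fun n => if n ≤ k then A n else 0

/-- The residue: coefficient of `P⁻¹`. -/
def res (A : Coeffs N) : (Fin N → ℝ) → ℝ := A (-1)

/-- The constant Laurent series `1`. -/
def one' : Coeffs N := fun n => if n = 0 then (fun _ => (1 : ℝ)) else 0

/-- `powC A q` is the `q`-th power `A^q`. -/
noncomputable def powC (A : Coeffs N) : ℕ → Coeffs N
  | 0 => one'
  | q + 1 => mul A (powC A q)

/-- `e^{-ad φ} A = Σ_{k≥0} (1/k!) (φ_X)^k ∂_P^k A`. -/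
noncomputable def expAdNeg [NeZero N] (φ : (Fin N → ℝ) → ℝ) (A : Coeffs N) : Coeffs N :=
  fun n x => ∑' k : ℕ, (pd 0 φ x) ^ k / (Nat.factorial k : ℝ) * (dP^[k] A) n x

/-- `e^{ad φ} A = Σ_{k≥0} (1/k!) (-φ_X)^k ∂_P^k A`. -/
noncomputable def expAdPos [NeZero N] (φ : (Fin N → ℝ) → ℝ) (A : Coeffs N) : Coeffs N :=
  fun n x => ∑' k : ℕ, (-(pd 0 φ x)) ^ k / (Nat.factorial k : ℝ) * (dP^[k] A) n x

/-- A `P`-independent function viewed as a Laurent series concentrated at `P^0`. -/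
def const (φ : (Fin N → ℝ) → ℝ) : Coeffs N := fun n => if n = 0 then φ else 0

/-- Evaluation of the polynomial (non-negative) part of `A` at `P = φ_X`. -/
noncomputable def evalAtPhiX [NeZero N] (A : Coeffs N) (φ : (Fin N → ℝ) → ℝ) :
    (Fin N → ℝ) → ℝ :=
  fun x => ∑' k : ℕ, A (k : ℤ) x * (pd 0 φ x) ^ k

/-- The shape `λ = P + U₂ P⁻¹ + U₃ P⁻² + ⋯` of the dKP Lax function. -/
def IsDKPShape (lam : Coeffs N) : Prop :=
  (lam 1 = fun _ => (1 : ℝ)) ∧ lam 0 = 0 ∧ ∀ n : ℤ, 2 ≤ n → lam n = 0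

/-- The shape `μ = P + V₀ + V₁ P⁻¹ + ⋯` of the dmKP Lax function. -/
def IsDMKPShape (mu : Coeffs N) : Prop :=
  (mu 1 = fun _ => (1 : ℝ)) ∧ ∀ n : ℤ, 2 ≤ n → mu n = 0


-- ============ pd lemmas ============

lemma contDiff_pd (q : Fin N) {f : (Fin N → ℝ) → ℝ} (hf : ContDiff ℝ (⊤ : ℕ∞) f) :
    ContDiff ℝ (⊤ : ℕ∞) (pd q f) := by
  have h1 : ContDiff ℝ (⊤ : ℕ∞) (fderiv ℝ f) := hf.fderiv_right (by simp)
  exact h1.clm_apply contDiff_const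

lemma pd_congr (q : Fin N) {f g : (Fin N → ℝ) → ℝ} (h : f = g) : pd q f = pd q g := by rw [h]

lemma pd_const (q : Fin N) (c : ℝ) : pd q (fun _ => c) = fun _ => 0 := by
  funext x; simp [pd, fderiv_const]

lemma pd_zero (q : Fin N) : pd q (0 : (Fin N → ℝ) → ℝ) = fun _ => 0 := by
  have : (0 : (Fin N → ℝ) → ℝ) = fun _ => (0:ℝ) := rfl
  rw [this, pd_const]

lemma pd_add (q : Fin N) {f g : (Fin N → ℝ) → ℝ} (hf : Differentiable ℝ f)
    (hg : Differentiable ℝ g) :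
    pd q (fun x => f x + g x) = fun x => pd q f x + pd q g x := by
  funext x
  simp only [pd]
  rw [fderiv_fun_add (hf x) (hg x)]
  simp

lemma pd_sub (q : Fin N) {f g : (Fin N → ℝ) → ℝ} (hf : Differentiable ℝ f)
    (hg : Differentiable ℝ g) :
    pd q (fun x => f x - g x) = fun x => pd q f x - pd q g x := by
  funext x
  simp only [pd]
  rw [fderiv_fun_sub (hf x) (hg x)]
  simp

lemma pd_mul (q : Fin N) {f g : (Fin N → ℝ) → ℝ} (hf : Differentiable ℝ f)
    (hg : Differentiable ℝ g) :
    pd q (fun x => f x * g x) = fun x => pd q f x * g x + f x * pd q g x := by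
  funext x
  simp only [pd]
  rw [fderiv_fun_mul (hf x) (hg x)]
  simp only [ContinuousLinearMap.add_apply, ContinuousLinearMap.smul_apply, smul_eq_mul]
  ring

lemma pd_const_mul (q : Fin N) (c : ℝ) {f : (Fin N → ℝ) → ℝ} (hf : Differentiable ℝ f) :
    pd q (fun x => c * f x) = fun x => c * pd q f x := by
  funext x
  simp only [pd]
  rw [fderiv_const_mul (hf x)]
  simp

lemma pd_finset_sum (q : Fin N) {ι : Type*} (s : Finset ι) {f : ι → (Fin N → ℝ) → ℝ}
    (hf : ∀ i ∈ s, Differentiable ℝ (f i)) :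
    pd q (fun x => ∑ i ∈ s, f i x) = fun x => ∑ i ∈ s, pd q (f i) x := by
  funext x
  simp only [pd]
  rw [fderiv_fun_sum (fun i hi => (hf i hi) x)]
  simp

lemma pd_finset_sum_apply (q : Fin N) {ι : Type*} (s : Finset ι) {f : ι → (Fin N → ℝ) → ℝ}
    (hf : ∀ i ∈ s, Differentiable ℝ (f i)) (x : Fin N → ℝ) :
    pd q (fun x => ∑ i ∈ s, f i x) x = ∑ i ∈ s, pd q (f i) x := by
  rw [pd_finset_sum q s hf]

lemma pd_mul_apply (q : Fin N) {f g : (Fin N → ℝ) → ℝ} (hf : Differentiable ℝ f)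
    (hg : Differentiable ℝ g) (x : Fin N → ℝ) :
    pd q (fun x => f x * g x) x = pd q f x * g x + f x * pd q g x := by
  rw [pd_mul q hf hg]

lemma pd_pow (q : Fin N) {f : (Fin N → ℝ) → ℝ} (hf : Differentiable ℝ f) (k : ℕ) :
    pd q (fun x => f x ^ (k+1)) = fun x => ((k:ℝ)+1) * f x ^ k * pd q f x := by
  induction k with
  | zero => funext x; simp [pd_congr q (funext fun x => pow_one (f x))]
  | succ k ih =>
    have : (fun x => f x ^ (k+2)) = fun x => f x ^ (k+1) * f x := by
      funext x; ring
    rw [pd_congr q this, pd_mul q (f := fun x => f x ^ (k+1)) ((hf.pow (k+1))) hf]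
    funext x
    rw [congrFun ih x]
    push_cast
    ring

-- ============ Summability helpers ============

lemma summable_of_bounds {f : ℤ → ℝ} (lo hi : ℤ) (h : ∀ i : ℤ, i < lo ∨ hi < i → f i = 0) :
    Summable f := by
  apply summable_of_ne_finset_zero (s := Finset.Icc lo hi)
  intro i hi
  apply h
  simp only [Finset.mem_Icc, not_and_or, not_le] at hi
  omega

-- ============ Bdd ============

def Bdd (A : Coeffs N) (m : ℤ) : Prop := ∀ ⦃n : ℤ⦄, m < n → ∀ x, A n x = 0

lemma Bdd.mono {A : Coeffs N} {m m' : ℤ} (h : Bdd A m) (hm : m ≤ m') : Bdd A m' :=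
  fun n hn x => h (lt_of_le_of_lt hm hn) x

lemma bdd_mul {A B : Coeffs N} {ma mb : ℤ} (hA : Bdd A ma) (hB : Bdd B mb) :
    Bdd (mul A B) (ma + mb) := by
  intro n hn x
  have : ∀ i : ℤ, A i x * B (n - i) x = 0 := by
    intro i
    rcases le_or_gt i ma with h | h
    · rw [hB (by omega) x, mul_zero]
    · rw [hA h x, zero_mul]
  simp only [DMKP.mul]
  rw [tsum_congr (fun i => this i)]
  exact tsum_zero

lemma mul_summable {A B : Coeffs N} {ma mb : ℤ} (hA : Bdd A ma) (hB : Bdd B mb) (n : ℤ)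
    (x : Fin N → ℝ) : Summable (fun i : ℤ => A i x * B (n - i) x) := by
  apply summable_of_bounds (n - mb) ma
  intro i hi
  rcases hi with h | h
  · rw [hB (by omega) x, mul_zero]
  · rw [hA h x, zero_mul]

lemma bdd_dP {A : Coeffs N} {m : ℤ} (hA : Bdd A m) : Bdd (dP A) (m - 1) := by
  intro n hn x
  simp only [DMKP.dP]
  rw [hA (by omega) x, mul_zero]

lemma bdd_dT {A : Coeffs N} {m : ℤ} (q : Fin N) (hA : Bdd A m) : Bdd (dT q A) m := by
  intro n hn x
  have h0 : A n = fun _ => (0:ℝ) := funext fun y => hA hn y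
  simp only [DMKP.dT]
  rw [pd_congr q h0, pd_const]

-- ============ dP iterates ============

lemma dP_iter (A : Coeffs N) (k : ℕ) (n : ℤ) (x : Fin N → ℝ) :
    (dP^[k] A) n x = (∏ i ∈ Finset.range k, ((n:ℝ) + i + 1)) * A (n + k) x := by
  induction k generalizing A n with
  | zero => simp
  | succ k ih =>
    rw [Function.iterate_succ_apply, ih (dP A) n]
    simp only [DMKP.dP]
    rw [Finset.prod_range_succ]
    have h1 : ((n + (k:ℤ) + 1 : ℤ) : ℝ) = (n:ℝ) + (k:ℝ) + 1 := by push_cast; ring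
    have h2 : (n + (k:ℤ)) + 1 = n + ((k:ℕ)+1 : ℕ) := by push_cast; ring
    rw [h1, h2]
    ring

lemma smooth_dP_iter {A : Coeffs N} (sA : ∀ n : ℤ, ContDiff ℝ (⊤ : ℕ∞) (A n)) (k : ℕ) (n : ℤ) :
    ContDiff ℝ (⊤ : ℕ∞) ((dP^[k] A) n) := by
  have : (dP^[k] A) n = fun x => (∏ i ∈ Finset.range k, ((n:ℝ) + i + 1)) * A (n + k) x :=
    funext fun x => dP_iter A k n x
  rw [this]
  exact contDiff_const.mul (sA _)

lemma dP_iter_zero_of_gt {A : Coeffs N} {m : ℤ} (hA : Bdd A m) {k : ℕ} {n : ℤ}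
    (h : m < n + k) (x : Fin N → ℝ) : (dP^[k] A) n x = 0 := by
  rw [dP_iter, hA h x, mul_zero]

lemma bdd_dP_iter {A : Coeffs N} {m : ℤ} (hA : Bdd A m) (k : ℕ) : Bdd (dP^[k] A) (m - k) :=
  fun n hn x => dP_iter_zero_of_gt hA (by omega) x

lemma dP_iter_zero_of_neg {A : Coeffs N} (hA : ∀ j : ℤ, j < 0 → ∀ x, A j x = 0) (k : ℕ)
    {n : ℤ} (hn : n < 0) (x : Fin N → ℝ) : (dP^[k] A) n x = 0 := by
  rw [dP_iter]
  rcases lt_or_ge (n + k) 0 with h | h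
  · rw [hA _ h x, mul_zero]
  · have hi : (-n-1).toNat ∈ Finset.range k := by
      simp only [Finset.mem_range]
      omega
    rw [Finset.prod_eq_zero hi, zero_mul]
    have : ((-n-1).toNat : ℤ) = -n-1 := Int.toNat_of_nonneg (by omega)
    have : (((-n-1).toNat : ℕ) : ℝ) = ((-n:ℝ)-1) := by
      rw [show (((-n-1).toNat : ℕ) : ℝ) = (((-n-1).toNat : ℤ) : ℝ) by push_cast; ring, this]
      push_cast; ring
    rw [this]
    ring

lemma pd_dP_iter {A : Coeffs N} (sA : ∀ n : ℤ, ContDiff ℝ (⊤ : ℕ∞) (A n)) (q : Fin N) (k : ℕ)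
    (n : ℤ) (x : Fin N → ℝ) :
    pd q ((dP^[k] A) n) x = (dP^[k] (dT q A)) n x := by
  have h1 : (dP^[k] A) n = fun x => (∏ i ∈ Finset.range k, ((n:ℝ) + i + 1)) * A (n + k) x :=
    funext fun x => dP_iter A k n x
  rw [pd_congr q h1, pd_const_mul q _ ((sA _).differentiable (by simp))]
  rw [dP_iter (dT q A) k n x]
  rfl

def Pinv (g : (Fin N → ℝ) → ℝ) : Coeffs N := fun n x => if n = -1 then g x else 0

-- ============ expAdNeg basics ============

section E
variable [NeZero N] {A F G H : Coeffs N} {m mf mg mh : ℤ} (φ : (Fin N → ℝ) → ℝ)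

lemma summable_E_terms (hA : Bdd A m) (c : ℝ) (n : ℤ) (x : Fin N → ℝ) :
    Summable (fun k : ℕ => c ^ k / (Nat.factorial k : ℝ) * (dP^[k] A) n x) := by
  apply summable_of_ne_finset_zero (s := Finset.range ((m - n).toNat + 1))
  intro k hk
  simp only [Finset.mem_range, not_lt] at hk
  rw [dP_iter_zero_of_gt hA (by omega) x, mul_zero]

lemma expAdNeg_eq_sum (hA : Bdd A m) (n : ℤ) (x : Fin N → ℝ) (K : ℕ) (hK : m < n + K) :
    expAdNeg φ A n x
      = ∑ k ∈ Finset.range K, (pd 0 φ x) ^ k / (Nat.factorial k : ℝ) * (dP^[k] A) n x := by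
  apply tsum_eq_sum
  intro k hk
  simp only [Finset.mem_range, not_lt] at hk
  rw [dP_iter_zero_of_gt hA (by omega) x, mul_zero]

lemma expAdPos_eq_sum (hA : Bdd A m) (n : ℤ) (x : Fin N → ℝ) (K : ℕ) (hK : m < n + K) :
    expAdPos φ A n x
      = ∑ k ∈ Finset.range K, (-(pd 0 φ x)) ^ k / (Nat.factorial k : ℝ) * (dP^[k] A) n x := by
  apply tsum_eq_sum
  intro k hk
  simp only [Finset.mem_range, not_lt] at hk
  rw [dP_iter_zero_of_gt hA (by omega) x, mul_zero]

lemma bdd_expAdNeg (hA : Bdd A m) : Bdd (expAdNeg φ A) m := by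
  intro n hn x
  simp only [expAdNeg]
  rw [tsum_congr (fun k => by rw [dP_iter_zero_of_gt hA (by omega) x, mul_zero])]
  exact tsum_zero

lemma smooth_expAdNeg (hA : Bdd A m) (sA : ∀ j : ℤ, ContDiff ℝ (⊤ : ℕ∞) (A j))
    (hφ : ContDiff ℝ (⊤ : ℕ∞) φ) (n : ℤ) : ContDiff ℝ (⊤ : ℕ∞) (expAdNeg φ A n) := by
  have : expAdNeg φ A n = fun x => ∑ k ∈ Finset.range ((m - n).toNat + 1),
      (pd 0 φ x) ^ k / (Nat.factorial k : ℝ) * (dP^[k] A) n x := by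
    funext x
    exact expAdNeg_eq_sum φ hA n x _ (by push_cast; omega)
  rw [this]
  apply ContDiff.sum
  intro k _
  exact (((contDiff_pd 0 hφ).pow k).div_const _).mul (smooth_dP_iter sA k n)

lemma expAdNeg_nonneg_supp (hA : ∀ j : ℤ, j < 0 → ∀ x, A j x = 0) {n : ℤ} (hn : n < 0)
    (x : Fin N → ℝ) : expAdNeg φ A n x = 0 := by
  simp only [expAdNeg]
  rw [tsum_congr (fun k => by rw [dP_iter_zero_of_neg hA k hn x, mul_zero])]
  exact tsum_zero

lemma expAdNeg_neg_supp (hA : ∀ j : ℤ, 0 ≤ j → ∀ x, A j x = 0) :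
    (∀ n : ℤ, 0 ≤ n → ∀ x, expAdNeg φ A n x = 0)
      ∧ (∀ x, expAdNeg φ A (-1) x = A (-1) x) := by
  constructor
  · intro n hn x
    simp only [expAdNeg]
    rw [tsum_congr (fun k => by
      rw [dP_iter, hA (n + k) (by omega) x, mul_zero, mul_zero])]
    exact tsum_zero
  · intro x
    simp only [expAdNeg]
    rw [tsum_eq_single 0 (fun k hk => ?_)]
    · simp
    · rw [dP_iter, hA (-1 + k) (by omega) x, mul_zero, mul_zero]

lemma bdd_comb_sub {F G : Coeffs N} (hF : Bdd F mf) (hG : Bdd G mg) :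
    Bdd (fun n x => F n x - G n x) (max mf mg) := by
  intro n hn x
  show F n x - G n x = 0
  rw [hF (by omega) x, hG (by omega) x, sub_zero]

lemma bdd_comb_add {F G : Coeffs N} (hF : Bdd F mf) (hG : Bdd G mg) :
    Bdd (fun n x => F n x + G n x) (max mf mg) := by
  intro n hn x
  show F n x + G n x = 0
  rw [hF (by omega) x, hG (by omega) x, add_zero]

lemma expAdNeg_add (hF : Bdd F mf) (hG : Bdd G mg) (n : ℤ) (x : Fin N → ℝ) :
    expAdNeg φ (fun n x => F n x + G n x) n x = expAdNeg φ F n x + expAdNeg φ G n x := by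
  simp only [expAdNeg]
  have h : ∀ k : ℕ, (pd 0 φ x) ^ k / (Nat.factorial k : ℝ)
        * (dP^[k] (fun n x => F n x + G n x)) n x
      = (pd 0 φ x) ^ k / (Nat.factorial k : ℝ) * (dP^[k] F) n x
        + (pd 0 φ x) ^ k / (Nat.factorial k : ℝ) * (dP^[k] G) n x := by
    intro k
    simp only [dP_iter]
    ring
  refine (tsum_congr h).trans ?_
  exact Summable.tsum_add (summable_E_terms hF _ n x) (summable_E_terms hG _ n x)

lemma expAdNeg_sub (hF : Bdd F mf) (hG : Bdd G mg) (n : ℤ) (x : Fin N → ℝ) :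
    expAdNeg φ (fun n x => F n x - G n x) n x = expAdNeg φ F n x - expAdNeg φ G n x := by
  simp only [expAdNeg]
  have h : ∀ k : ℕ, (pd 0 φ x) ^ k / (Nat.factorial k : ℝ)
        * (dP^[k] (fun n x => F n x - G n x)) n x
      = (pd 0 φ x) ^ k / (Nat.factorial k : ℝ) * (dP^[k] F) n x
        - (pd 0 φ x) ^ k / (Nat.factorial k : ℝ) * (dP^[k] G) n x := by
    intro k
    simp only [dP_iter]
    ring
  refine (tsum_congr h).trans ?_
  exact Summable.tsum_sub (summable_E_terms hF _ n x) (summable_E_terms hG _ n x)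

lemma dP_expAdNeg (n : ℤ) (x : Fin N → ℝ) :
    dP (expAdNeg φ A) n x = expAdNeg φ (dP A) n x := by
  simp only [DMKP.dP, expAdNeg]
  rw [← tsum_mul_left]
  apply tsum_congr
  intro k
  have h1 : (dP^[k] (dP A)) n x = (dP^[k+1] A) n x := by
    rw [Function.iterate_succ_apply]
  rw [h1, dP_iter, dP_iter, Finset.prod_range_succ']
  have h2 : n + ((k:ℕ) + 1 : ℕ) = n + 1 + (k:ℤ) := by push_cast; ring
  rw [h2]
  have h3 : ∀ i ∈ Finset.range k, ((n:ℝ) + ((i+1:ℕ):ℝ) + 1) = (((n+1:ℤ)):ℝ) + (i:ℕ) + 1 := by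
    intro i _
    push_cast
    ring
  rw [Finset.prod_congr rfl h3]
  push_cast
  ring

lemma dP_expAdNeg' : dP (expAdNeg φ A) = expAdNeg φ (dP A) :=
  funext fun n => funext fun x => dP_expAdNeg φ n x

lemma dP_iter_expAdNeg (k : ℕ) : dP^[k] (expAdNeg φ A) = expAdNeg φ (dP^[k] A) := by
  induction k generalizing A with
  | zero => rfl
  | succ k ih =>
    rw [Function.iterate_succ_apply, dP_expAdNeg' φ, ih, ← Function.iterate_succ_apply]

end E

-- ============ mul lemmas ============

section Mul
variable {A B F G H : Coeffs N} {ma mb mf mg mh : ℤ}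

lemma mul_comm' (A B : Coeffs N) (n : ℤ) (x : Fin N → ℝ) : mul A B n x = mul B A n x := by
  simp only [mul]
  calc ∑' i : ℤ, A i x * B (n - i) x
      = ∑' i : ℤ, (fun j : ℤ => B j x * A (n - j) x) ((Equiv.subLeft n) i) := by
        apply tsum_congr
        intro i
        simp only [Equiv.subLeft_apply]
        rw [show n - (n - i) = i by ring]
        ring
    _ = ∑' j : ℤ, B j x * A (n - j) x :=
        Equiv.tsum_eq (Equiv.subLeft n) (fun j => B j x * A (n - j) x)

lemma mul_addR (hF : Bdd F mf) (hG : Bdd G mg) (hH : Bdd H mh) (n : ℤ) (x : Fin N → ℝ) :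
    mul F (fun n x => G n x + H n x) n x = mul F G n x + mul F H n x := by
  simp only [mul]
  have h : ∀ i : ℤ, F i x * (G (n - i) x + H (n - i) x)
      = F i x * G (n - i) x + F i x * H (n - i) x := fun i => by ring
  refine (tsum_congr h).trans ?_
  exact Summable.tsum_add (mul_summable hF hG n x) (mul_summable hF hH n x)

lemma mul_subR (hF : Bdd F mf) (hG : Bdd G mg) (hH : Bdd H mh) (n : ℤ) (x : Fin N → ℝ) :
    mul F (fun n x => G n x - H n x) n x = mul F G n x - mul F H n x := by
  simp only [mul]
  have h : ∀ i : ℤ, F i x * (G (n - i) x - H (n - i) x)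
      = F i x * G (n - i) x - F i x * H (n - i) x := fun i => by ring
  refine (tsum_congr h).trans ?_
  exact Summable.tsum_sub (mul_summable hF hG n x) (mul_summable hF hH n x)

lemma mul_smulR (s : (Fin N → ℝ) → ℝ) (F G : Coeffs N) (n : ℤ) (x : Fin N → ℝ) :
    mul F (fun n x => s x * G n x) n x = s x * mul F G n x := by
  simp only [mul]
  rw [← tsum_mul_left]
  apply tsum_congr
  intro i
  ring

lemma mul_smulL (s : (Fin N → ℝ) → ℝ) (F G : Coeffs N) (n : ℤ) (x : Fin N → ℝ) :
    mul (fun n x => s x * F n x) G n x = s x * mul F G n x := by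
  simp only [mul]
  rw [← tsum_mul_left]
  apply tsum_congr
  intro i
  ring

lemma dP_mul (hA : Bdd A ma) (hB : Bdd B mb) (n : ℤ) (x : Fin N → ℝ) :
    dP (mul A B) n x = mul (dP A) B n x + mul A (dP B) n x := by
  have S1 : Summable (fun j : ℤ => (j : ℝ) * A j x * B (n + 1 - j) x) := by
    apply summable_of_bounds (n + 1 - mb) ma
    intro i hi
    rcases hi with h | h
    · rw [hB (by omega) x, mul_zero]
    · rw [hA h x, mul_zero, zero_mul]
  have S2 : Summable (fun j : ℤ => A j x * (((n + 1 - j : ℤ)) : ℝ) * B (n + 1 - j) x) := by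
    apply summable_of_bounds (n + 1 - mb) ma
    intro i hi
    rcases hi with h | h
    · rw [hB (by omega) x, mul_zero]
    · rw [hA h x, zero_mul, zero_mul]
  have e1 : mul (dP A) B n x = ∑' j : ℤ, (j : ℝ) * A j x * B (n + 1 - j) x := by
    simp only [mul, DMKP.dP]
    calc ∑' i : ℤ, ((i + 1 : ℤ) : ℝ) * A (i + 1) x * B (n - i) x
        = ∑' i : ℤ, (fun j : ℤ => (j : ℝ) * A j x * B (n + 1 - j) x) ((Equiv.addRight (1:ℤ)) i) := by
          apply tsum_congr
          intro i
          simp only [Equiv.coe_addRight]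
          rw [show n + 1 - (i + 1) = n - i by ring]
      _ = _ := Equiv.tsum_eq (Equiv.addRight (1:ℤ)) (fun j => (j : ℝ) * A j x * B (n + 1 - j) x)
  have e2 : mul A (dP B) n x = ∑' j : ℤ, A j x * (((n + 1 - j : ℤ)) : ℝ) * B (n + 1 - j) x := by
    simp only [mul, DMKP.dP]
    apply tsum_congr
    intro i
    rw [show n - i + 1 = n + 1 - i by ring]
    ring
  rw [e1, e2, ← Summable.tsum_add S1 S2]
  simp only [DMKP.dP, mul]
  rw [← tsum_mul_left]
  apply tsum_congr
  intro j
  push_cast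
  ring

lemma pascal_sum (T : ℕ → ℕ → ℝ) (m : ℕ) :
    ∑ j ∈ Finset.range (m+2), ((m+1).choose j : ℝ) * T j (m+1-j)
      = ∑ j ∈ Finset.range (m+1), (m.choose j : ℝ) * T (j+1) (m-j)
        + ∑ j ∈ Finset.range (m+1), (m.choose j : ℝ) * T j (m+1-j) := by
  rw [Finset.sum_range_succ' (fun j => ((m+1).choose j : ℝ) * T j (m+1-j)) (m+1)]
  have h1 : ∀ j ∈ Finset.range (m+1), ((m+1).choose (j+1) : ℝ) * T (j+1) (m+1-(j+1))
      = (m.choose j : ℝ) * T (j+1) (m-j) + (m.choose (j+1) : ℝ) * T (j+1) (m-j) := by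
    intro j _
    rw [show m+1-(j+1) = m-j from by omega, Nat.choose_succ_succ m j]
    push_cast
    ring
  rw [Finset.sum_congr rfl h1, Finset.sum_add_distrib]
  have h2 : ∑ j ∈ Finset.range (m+1), (m.choose (j+1) : ℝ) * T (j+1) (m-j)
      + ((m+1).choose 0 : ℝ) * T 0 (m+1-0)
      = ∑ j ∈ Finset.range (m+1), (m.choose j : ℝ) * T j (m+1-j) := by
    have h3 : ∑ j ∈ Finset.range (m+2), (m.choose j : ℝ) * T j (m+1-j)
        = ∑ j ∈ Finset.range (m+1), (m.choose j : ℝ) * T j (m+1-j) := by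
      rw [Finset.sum_range_succ]
      simp [Nat.choose_succ_self]
    rw [← h3, Finset.sum_range_succ' (fun j => (m.choose j : ℝ) * T j (m+1-j)) (m+1)]
    congr 1
    · apply Finset.sum_congr rfl
      intro j _
      rw [show m+1-(j+1) = m-j from by omega]
    · simp
  linarith [h2]

lemma dP_iter_mul (hA : Bdd A ma) (hB : Bdd B mb) (m : ℕ) :
    ∀ (n : ℤ) (x : Fin N → ℝ), dP^[m] (mul A B) n x
      = ∑ j ∈ Finset.range (m+1),
          (m.choose j : ℝ) * mul (dP^[j] A) (dP^[m-j] B) n x := by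
  induction m with
  | zero => intro n x; simp
  | succ m ih =>
    intro n x
    have hfun : dP^[m] (mul A B) = fun n x => ∑ j ∈ Finset.range (m+1),
        (m.choose j : ℝ) * mul (dP^[j] A) (dP^[m-j] B) n x :=
      funext fun n => funext fun x => ih n x
    rw [Function.iterate_succ_apply', hfun]
    show ((n+1:ℤ):ℝ) * (∑ j ∈ Finset.range (m+1),
        (m.choose j : ℝ) * mul (dP^[j] A) (dP^[m-j] B) (n+1) x) = _
    rw [Finset.mul_sum]
    have step : ∀ j ∈ Finset.range (m+1),
        ((n+1:ℤ):ℝ) * ((m.choose j : ℝ) * mul (dP^[j] A) (dP^[m-j] B) (n+1) x)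
        = (m.choose j : ℝ) * mul (dP^[j+1] A) (dP^[m-j] B) n x
          + (m.choose j : ℝ) * mul (dP^[j] A) (dP^[(m-j)+1] B) n x := by
      intro j _
      have hd := dP_mul (bdd_dP_iter hA j) (bdd_dP_iter hB (m-j)) n x
      rw [← Function.iterate_succ_apply' dP j A,
        ← Function.iterate_succ_apply' dP (m-j) B] at hd
      calc ((n+1:ℤ):ℝ) * ((m.choose j : ℝ) * mul (dP^[j] A) (dP^[m-j] B) (n+1) x)
          = (m.choose j : ℝ) * (((n+1:ℤ):ℝ) * mul (dP^[j] A) (dP^[m-j] B) (n+1) x) := by ring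
        _ = (m.choose j : ℝ) * (dP (mul (dP^[j] A) (dP^[m-j] B)) n x) := rfl
        _ = _ := by rw [hd]; ring
    rw [Finset.sum_congr rfl step, Finset.sum_add_distrib]
    have h4 : ∑ j ∈ Finset.range (m+1), (m.choose j : ℝ) * mul (dP^[j] A) (dP^[(m-j)+1] B) n x
        = ∑ j ∈ Finset.range (m+1), (m.choose j : ℝ) * mul (dP^[j] A) (dP^[m+1-j] B) n x := by
      apply Finset.sum_congr rfl
      intro j hj
      simp only [Finset.mem_range] at hj
      rw [show (m-j)+1 = m+1-j from by omega]
    rw [h4, ← pascal_sum (fun a b => mul (dP^[a] A) (dP^[b] B) n x) m]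

-- ============ double sum regrouping ============

lemma sum_sq_antidiag {K : ℕ} (f : ℕ → ℕ → ℝ) (hf : ∀ j k, K ≤ j + k → f j k = 0) :
    ∑ j ∈ Finset.range K, ∑ k ∈ Finset.range K, f j k
      = ∑ m ∈ Finset.range K, ∑ j ∈ Finset.range (m+1), f j (m - j) := by
  have step1 : ∀ j ∈ Finset.range K, ∑ k ∈ Finset.range K, f j k
      = ∑ m ∈ Finset.range K, (if j ≤ m then f j (m - j) else 0) := by
    intro j hj
    have h1 : ∑ k ∈ Finset.range K, f j k
        = ∑ m ∈ Finset.Ico j (j+K), (if j ≤ m then f j (m-j) else 0) := by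
      rw [Finset.sum_Ico_eq_sum_range]
      simp only [add_tsub_cancel_left]
      apply Finset.sum_congr rfl
      intro k _
      simp
    rw [h1]
    have h2 : ∑ m ∈ Finset.Ico j (j+K), (if j ≤ m then f j (m-j) else 0)
        = ∑ m ∈ Finset.range (j+K), (if j ≤ m then f j (m-j) else 0) := by
      apply Finset.sum_subset
      · intro m hm
        simp only [Finset.mem_Ico] at hm
        simp only [Finset.mem_range]
        omega
      · intro m hm hnm
        simp only [Finset.mem_range] at hm
        simp only [Finset.mem_Ico, not_and, not_le] at hnm
        have : ¬ j ≤ m := by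
          by_contra hc
          exact absurd (hnm hc) (by omega)
        simp [this]
    have h3 : ∑ m ∈ Finset.range K, (if j ≤ m then f j (m-j) else 0)
        = ∑ m ∈ Finset.range (j+K), (if j ≤ m then f j (m-j) else 0) := by
      apply Finset.sum_subset
      · intro m hm
        simp only [Finset.mem_range] at hm ⊢
        omega
      · intro m hm hnm
        simp only [Finset.mem_range, not_lt] at hm hnm
        rcases le_or_gt j m with h | h
        · simp only [h, if_true]
          exact hf j (m-j) (by omega)
        · simp [not_le.mpr h]
    rw [h2, ← h3]
  rw [Finset.sum_congr rfl step1, Finset.sum_comm]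
  apply Finset.sum_congr rfl
  intro m hm
  simp only [Finset.mem_range] at hm
  have h5 : ∑ j ∈ Finset.range (m+1), (if j ≤ m then f j (m-j) else 0)
      = ∑ j ∈ Finset.range K, (if j ≤ m then f j (m-j) else 0) := by
    apply Finset.sum_subset
    · intro j hj
      simp only [Finset.mem_range] at hj ⊢
      omega
    · intro j hj hnj
      simp only [Finset.mem_range, not_lt] at hj hnj
      simp [show ¬ j ≤ m from by omega]
  rw [← h5]
  apply Finset.sum_congr rfl
  intro j hj
  simp only [Finset.mem_range] at hj
  simp [show j ≤ m from by omega]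

end Mul

-- ============ E is multiplicative ============

section EMul
variable [NeZero N] {A B : Coeffs N} {ma mb : ℤ} (φ : (Fin N → ℝ) → ℝ)

lemma choose_coeff_eq (c : ℝ) {j m : ℕ} (hj : j ≤ m) :
    c^m / (m.factorial : ℝ) * (m.choose j : ℝ)
      = c^j / (j.factorial : ℝ) * (c^(m-j) / ((m-j).factorial : ℝ)) := by
  have hfact : ((m.choose j : ℕ) : ℝ) * (j.factorial : ℝ) * (((m-j).factorial : ℕ) : ℝ)
      = (m.factorial : ℝ) := by
    exact_mod_cast congrArg (fun t : ℕ => (t : ℝ)) (Nat.choose_mul_factorial_mul_factorial hj)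
  have hpow : c ^ m = c ^ j * c ^ (m - j) := by
    rw [← pow_add]
    congr 1
    omega
  have hj0 : (j.factorial : ℝ) ≠ 0 := by positivity
  have hmj0 : ((m-j).factorial : ℝ) ≠ 0 := by positivity
  have hm0 : (m.factorial : ℝ) ≠ 0 := by positivity
  field_simp
  rw [hpow, ← hfact]
  ring

lemma expAdNeg_mul (hA : Bdd A ma) (hB : Bdd B mb) (n : ℤ) (x : Fin N → ℝ) :
    expAdNeg φ (mul A B) n x = mul (expAdNeg φ A) (expAdNeg φ B) n x := by
  set c := pd 0 φ x with hc
  set K := (ma + mb - n).toNat + 1 with hKdef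
  have hK : ma + mb < n + K := by
    have := Int.self_le_toNat (ma + mb - n)
    push_cast [hKdef]
    omega
  -- LHS
  have L1 : expAdNeg φ (mul A B) n x = ∑ m ∈ Finset.range K, ∑ j ∈ Finset.range (m+1),
      c^j / (j.factorial : ℝ) * (c^(m-j) / ((m-j).factorial : ℝ))
        * mul (dP^[j] A) (dP^[m-j] B) n x := by
    rw [expAdNeg_eq_sum φ (bdd_mul hA hB) n x K hK]
    apply Finset.sum_congr rfl
    intro m _
    rw [dP_iter_mul hA hB m n x, Finset.mul_sum]
    apply Finset.sum_congr rfl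
    intro j hj
    simp only [Finset.mem_range, Nat.lt_succ_iff] at hj
    rw [← mul_assoc, choose_coeff_eq c hj]
  -- RHS
  have R1 : mul (expAdNeg φ A) (expAdNeg φ B) n x
      = ∑ i ∈ Finset.Icc (n - mb) ma, expAdNeg φ A i x * expAdNeg φ B (n - i) x := by
    apply tsum_eq_sum
    intro i hi
    simp only [Finset.mem_Icc, not_and_or, not_le] at hi
    rcases hi with h | h
    · rw [bdd_expAdNeg φ hB (show mb < n - i by omega) x, mul_zero]
    · rw [bdd_expAdNeg φ hA h x, zero_mul]
  have R2 : ∀ i ∈ Finset.Icc (n - mb) ma, expAdNeg φ A i x * expAdNeg φ B (n - i) x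
      = ∑ m ∈ Finset.range K, ∑ j ∈ Finset.range (m+1),
          (c^j / (j.factorial : ℝ) * (dP^[j] A) i x)
            * (c^(m-j) / ((m-j).factorial : ℝ) * (dP^[m-j] B) (n-i) x) := by
    intro i hi
    simp only [Finset.mem_Icc] at hi
    rw [expAdNeg_eq_sum φ hA i x K (by omega), expAdNeg_eq_sum φ hB (n-i) x K (by omega)]
    rw [Finset.sum_mul_sum]
    exact sum_sq_antidiag _ (by
      intro j k hjk
      rcases le_or_gt (i + j) ma with h | h
      · rw [dP_iter_zero_of_gt hB (show mb < (n-i) + k by omega) x, mul_zero, mul_zero]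
      · rw [dP_iter_zero_of_gt hA (show ma < i + j by omega) x, mul_zero, zero_mul])
  rw [L1, R1, Finset.sum_congr rfl R2, Finset.sum_comm]
  apply Finset.sum_congr rfl
  intro m _
  rw [Finset.sum_comm]
  apply Finset.sum_congr rfl
  intro j hj
  simp only [Finset.mem_range, Nat.lt_succ_iff] at hj
  have hmulsum : mul (dP^[j] A) (dP^[m-j] B) n x
      = ∑ i ∈ Finset.Icc (n - mb) ma, (dP^[j] A) i x * (dP^[m-j] B) (n-i) x := by
    apply tsum_eq_sum
    intro i hi
    simp only [Finset.mem_Icc, not_and_or, not_le] at hi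
    rcases hi with h | h
    · rw [dP_iter_zero_of_gt hB (show mb < (n-i) + ((m-j : ℕ) : ℤ) by omega) x, mul_zero]
    · rw [dP_iter_zero_of_gt hA (show ma < i + ((j:ℕ):ℤ) by omega) x, zero_mul]
  rw [hmulsum, Finset.mul_sum]
  apply Finset.sum_congr rfl
  intro i _
  ring

-- ============ expAdPos ∘ expAdNeg = id ============

lemma expAdPos_expAdNeg {m : ℤ} (hA : Bdd A m) (n : ℤ) (x : Fin N → ℝ) :
    expAdPos φ (expAdNeg φ A) n x = A n x := by
  set c := pd 0 φ x with hc
  set K := (m - n).toNat + 1 with hKdef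
  have hK : m < n + K := by
    have := Int.self_le_toNat (m - n)
    push_cast [hKdef]
    omega
  have L1 : expAdPos φ (expAdNeg φ A) n x
      = ∑ j ∈ Finset.range K, (-c)^j / (j.factorial : ℝ) * (dP^[j] (expAdNeg φ A)) n x :=
    expAdPos_eq_sum φ (bdd_expAdNeg φ hA) n x K hK
  have L2 : ∀ j ∈ Finset.range K, (-c)^j / (j.factorial : ℝ) * (dP^[j] (expAdNeg φ A)) n x
      = ∑ k ∈ Finset.range K,
          (-c)^j / (j.factorial : ℝ) * (c^k / (k.factorial : ℝ) * (dP^[j+k] A) n x) := by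
    intro j _
    rw [dP_iter_expAdNeg, expAdNeg_eq_sum φ (bdd_dP_iter hA j) n x K (by omega), Finset.mul_sum]
    apply Finset.sum_congr rfl
    intro k _
    have : dP^[k] (dP^[j] A) = dP^[j+k] A := by
      rw [← Function.iterate_add_apply, Nat.add_comm]
    rw [this]
  rw [L1, Finset.sum_congr rfl L2]
  rw [sum_sq_antidiag (fun j k => (-c)^j / (j.factorial : ℝ)
      * (c^k / (k.factorial : ℝ) * (dP^[j+k] A) n x))
    (by
      intro j k hjk
      simp [dP_iter_zero_of_gt hA (show m < n + ((j+k : ℕ) : ℤ) by omega) x])]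
  have inner : ∀ mm ∈ Finset.range K, (∑ j ∈ Finset.range (mm+1), (-c)^j / (j.factorial : ℝ)
        * (c^(mm-j) / ((mm-j).factorial : ℝ) * (dP^[j+(mm-j)] A) n x))
      = (if mm = 0 then 1 else 0) * (dP^[mm] A) n x := by
    intro mm _
    have h1 : ∀ j ∈ Finset.range (mm+1), (-c)^j / (j.factorial : ℝ)
          * (c^(mm-j) / ((mm-j).factorial : ℝ) * (dP^[j+(mm-j)] A) n x)
        = ((-c)^j * c^(mm-j) * (mm.choose j : ℝ)) / (mm.factorial : ℝ) * (dP^[mm] A) n x := by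
      intro j hj
      simp only [Finset.mem_range, Nat.lt_succ_iff] at hj
      rw [show j + (mm - j) = mm from by omega]
      have hfact : ((mm.choose j : ℕ) : ℝ) * (j.factorial : ℝ) * (((mm-j).factorial : ℕ) : ℝ)
          = (mm.factorial : ℝ) := by
        exact_mod_cast congrArg (fun t : ℕ => (t : ℝ)) (Nat.choose_mul_factorial_mul_factorial hj)
      have hj0 : (j.factorial : ℝ) ≠ 0 := by positivity
      have hmj0 : ((mm-j).factorial : ℝ) ≠ 0 := by positivity
      have hm0 : (mm.factorial : ℝ) ≠ 0 := by positivity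
      field_simp
      rw [← hfact]
      ring
    rw [Finset.sum_congr rfl h1, ← Finset.sum_mul, ← Finset.sum_div, ← add_pow (-c) c mm]
    rcases Nat.eq_zero_or_pos mm with h | h
    · subst h; simp
    · rw [neg_add_cancel, zero_pow (show mm ≠ 0 by omega)]
      simp [show mm ≠ 0 from by omega]
  rw [Finset.sum_congr rfl inner, Finset.sum_eq_single 0]
  · simp
  · intro b _ hb
    simp [hb]
  · intro h
    simp only [Finset.mem_range] at h
    omega

end EMul

-- ============ dX and expAdNeg ============

section DXE
variable [NeZero N] {A B F G H : Coeffs N} {m ma mb mf mg mh : ℤ} (φ : (Fin N → ℝ) → ℝ)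

lemma dX_expAdNeg (hA : Bdd A m) (sA : ∀ j : ℤ, ContDiff ℝ (⊤ : ℕ∞) (A j)) (hφ : ContDiff ℝ (⊤ : ℕ∞) φ)
    (n : ℤ) (x : Fin N → ℝ) :
    dX (expAdNeg φ A) n x
      = expAdNeg φ (dX A) n x + pd 0 (pd 0 φ) x * expAdNeg φ (dP A) n x := by
  have hdiffc : Differentiable ℝ (pd 0 φ) := (contDiff_pd 0 hφ).differentiable (by simp)
  set K' := (m - n).toNat with hK'
  have hfun : expAdNeg φ A n = fun y => ∑ k ∈ Finset.range (K'+1),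
      (pd 0 φ y)^k / (k.factorial : ℝ) * (dP^[k] A) n y :=
    funext fun y => expAdNeg_eq_sum φ hA n y _ (by
      have := Int.self_le_toNat (m - n)
      push_cast [hK']
      omega)
  show pd 0 (expAdNeg φ A n) x = _
  rw [pd_congr 0 hfun, pd_finset_sum_apply 0 _ (fun k _ =>
    ((((contDiff_pd 0 hφ).pow k).div_const _).mul (smooth_dP_iter sA k n)).differentiable (by simp)) x]
  have per : ∀ k ∈ Finset.range (K'+1),
      pd 0 (fun y => (pd 0 φ y)^k / (k.factorial : ℝ) * (dP^[k] A) n y) x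
      = pd 0 (fun y => (pd 0 φ y)^k) x / (k.factorial : ℝ) * (dP^[k] A) n x
        + (pd 0 φ x)^k / (k.factorial : ℝ) * (dP^[k] (dT 0 A)) n x := by
    intro k _
    rw [pd_mul_apply 0 (f := fun y => (pd 0 φ y)^k / (k.factorial : ℝ))
      ((((contDiff_pd 0 hφ).pow k).div_const _).differentiable (by simp))
      ((smooth_dP_iter sA k n).differentiable (by simp)) x]
    have h3 : pd 0 (fun y => (pd 0 φ y)^k / (k.factorial : ℝ)) x
        = pd 0 (fun y => (pd 0 φ y)^k) x / (k.factorial : ℝ) := by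
      have he : (fun y => (pd 0 φ y)^k / (k.factorial : ℝ))
          = fun y => ((k.factorial : ℝ))⁻¹ * (pd 0 φ y)^k := by
        funext y
        ring
      rw [pd_congr 0 he, pd_const_mul 0 _ (f := fun y => (pd 0 φ y)^k) (hdiffc.pow k)]
      show ((k.factorial : ℝ))⁻¹ * pd 0 (fun y => (pd 0 φ y)^k) x = _
      ring
    rw [h3, pd_dP_iter sA 0 k n x]
  rw [Finset.sum_congr rfl per, Finset.sum_add_distrib]
  have e2 : ∑ k ∈ Finset.range (K'+1), (pd 0 φ x)^k / (k.factorial : ℝ) * (dP^[k] (dT 0 A)) n x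
      = expAdNeg φ (dX A) n x := by
    rw [expAdNeg_eq_sum φ (show Bdd (dX A) m from bdd_dT 0 hA) n x (K'+1) (by
      have := Int.self_le_toNat (m - n)
      push_cast [hK']
      omega)]
    rfl
  have e1 : ∑ k ∈ Finset.range (K'+1), pd 0 (fun y => (pd 0 φ y)^k) x / (k.factorial : ℝ)
        * (dP^[k] A) n x
      = pd 0 (pd 0 φ) x * expAdNeg φ (dP A) n x := by
    rw [Finset.sum_range_succ' (fun k => pd 0 (fun y => (pd 0 φ y)^k) x / (k.factorial : ℝ)
        * (dP^[k] A) n x) K']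
    have hz : pd 0 (fun y => (pd 0 φ y)^0) x / ((0:ℕ).factorial : ℝ) * (dP^[0] A) n x = 0 := by
      have : (fun y : Fin N → ℝ => (pd 0 φ y)^0) = fun _ => (1:ℝ) := by
        funext y
        ring
      rw [pd_congr 0 this, pd_const]
      simp
    rw [hz, add_zero]
    have hterm : ∀ k ∈ Finset.range K',
        pd 0 (fun y => (pd 0 φ y)^(k+1)) x / ((k+1).factorial : ℝ) * (dP^[k+1] A) n x
        = pd 0 (pd 0 φ) x * ((pd 0 φ x)^k / (k.factorial : ℝ) * (dP^[k] (dP A)) n x) := by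
      intro k _
      rw [pd_pow 0 hdiffc k]
      have hit : (dP^[k+1] A) n x = (dP^[k] (dP A)) n x := by
        rw [Function.iterate_succ_apply]
      rw [hit]
      have hfac : ((k+1).factorial : ℝ) = ((k:ℝ)+1) * (k.factorial : ℝ) := by
        rw [Nat.factorial_succ]
        push_cast
        ring
      rw [hfac]
      have hk0 : (k.factorial : ℝ) ≠ 0 := by positivity
      field_simp
    rw [Finset.sum_congr rfl hterm, ← Finset.mul_sum]
    congr 1
    rw [expAdNeg_eq_sum φ (bdd_dP hA) n x K' (by
      have := Int.self_le_toNat (m - n)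
      push_cast [hK']
      omega)]
  rw [e1, e2]
  ring

-- ============ pb lemmas ============

lemma pb_addR (bF : Bdd F mf) (bG : Bdd G mg) (bH : Bdd H mh)
    (sG : ∀ n : ℤ, ContDiff ℝ (⊤ : ℕ∞) (G n)) (sH : ∀ n : ℤ, ContDiff ℝ (⊤ : ℕ∞) (H n)) (n : ℤ)
    (x : Fin N → ℝ) :
    pb F (fun n x => G n x + H n x) n x = pb F G n x + pb F H n x := by
  simp only [pb]
  have hdx : dX (fun n x => G n x + H n x) = fun n x => dX G n x + dX H n x := by
    funext j
    show pd 0 (fun x => G j x + H j x) = _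
    rw [pd_add 0 ((sG j).differentiable (by simp)) ((sH j).differentiable (by simp))]
    rfl
  have hdp : dP (fun n x => G n x + H n x) = fun n x => dP G n x + dP H n x := by
    funext j x
    show ((j+1:ℤ):ℝ) * (G (j+1) x + H (j+1) x) = _
    simp only [DMKP.dP]
    ring
  rw [hdx, hdp,
    mul_addR (bdd_dP bF) (show Bdd (dX G) mg from bdd_dT 0 bG)
      (show Bdd (dX H) mh from bdd_dT 0 bH) n x,
    mul_addR (show Bdd (dX F) mf from bdd_dT 0 bF) (bdd_dP bG) (bdd_dP bH) n x]
  ring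

lemma pb_subR (bF : Bdd F mf) (bG : Bdd G mg) (bH : Bdd H mh)
    (sG : ∀ n : ℤ, ContDiff ℝ (⊤ : ℕ∞) (G n)) (sH : ∀ n : ℤ, ContDiff ℝ (⊤ : ℕ∞) (H n)) (n : ℤ)
    (x : Fin N → ℝ) :
    pb F (fun n x => G n x - H n x) n x = pb F G n x - pb F H n x := by
  simp only [pb]
  have hdx : dX (fun n x => G n x - H n x) = fun n x => dX G n x - dX H n x := by
    funext j
    show pd 0 (fun x => G j x - H j x) = _
    rw [pd_sub 0 ((sG j).differentiable (by simp)) ((sH j).differentiable (by simp))]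
    rfl
  have hdp : dP (fun n x => G n x - H n x) = fun n x => dP G n x - dP H n x := by
    funext j x
    show ((j+1:ℤ):ℝ) * (G (j+1) x - H (j+1) x) = _
    simp only [DMKP.dP]
    ring
  rw [hdx, hdp,
    mul_subR (bdd_dP bF) (show Bdd (dX G) mg from bdd_dT 0 bG)
      (show Bdd (dX H) mh from bdd_dT 0 bH) n x,
    mul_subR (show Bdd (dX F) mf from bdd_dT 0 bF) (bdd_dP bG) (bdd_dP bH) n x]
  ring

lemma pb_antisymm (F G : Coeffs N) (n : ℤ) (x : Fin N → ℝ) : pb F G n x = - pb G F n x := by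
  simp only [pb]
  rw [mul_comm' (dP F) (dX G) n x, mul_comm' (dX F) (dP G) n x]
  ring

lemma pb_expAdNeg (hA : Bdd A ma) (hB : Bdd B mb) (sA : ∀ j : ℤ, ContDiff ℝ (⊤ : ℕ∞) (A j))
    (sB : ∀ j : ℤ, ContDiff ℝ (⊤ : ℕ∞) (B j)) (hφ : ContDiff ℝ (⊤ : ℕ∞) φ) (n : ℤ) (x : Fin N → ℝ) :
    pb (expAdNeg φ A) (expAdNeg φ B) n x = expAdNeg φ (pb A B) n x := by
  simp only [pb]
  have hdxB : dX (expAdNeg φ B) = fun n x => expAdNeg φ (dX B) n x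
      + pd 0 (pd 0 φ) x * expAdNeg φ (dP B) n x :=
    funext fun n => funext fun x => dX_expAdNeg φ hB sB hφ n x
  have hdxA : dX (expAdNeg φ A) = fun n x => expAdNeg φ (dX A) n x
      + pd 0 (pd 0 φ) x * expAdNeg φ (dP A) n x :=
    funext fun n => funext fun x => dX_expAdNeg φ hA sA hφ n x
  rw [hdxA, hdxB, dP_expAdNeg' φ, dP_expAdNeg' φ]
  rw [mul_addR (bdd_expAdNeg φ (bdd_dP hA)) (bdd_expAdNeg φ (show Bdd (dX B) mb from bdd_dT 0 hB))
    (show Bdd (fun n x => pd 0 (pd 0 φ) x * expAdNeg φ (dP B) n x) (mb - 1) from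
      fun j hj y => by
        show pd 0 (pd 0 φ) y * expAdNeg φ (dP B) j y = 0
        rw [bdd_expAdNeg φ (bdd_dP hB) hj y, mul_zero]) n x]
  have haddL : mul (fun n x => expAdNeg φ (dX A) n x + pd 0 (pd 0 φ) x * expAdNeg φ (dP A) n x)
      (expAdNeg φ (dP B)) n x
      = mul (expAdNeg φ (dX A)) (expAdNeg φ (dP B)) n x
        + mul (fun n x => pd 0 (pd 0 φ) x * expAdNeg φ (dP A) n x) (expAdNeg φ (dP B)) n x := by
    simp only [mul]
    have h : ∀ i : ℤ, (expAdNeg φ (dX A) i x + pd 0 (pd 0 φ) x * expAdNeg φ (dP A) i x)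
          * expAdNeg φ (dP B) (n - i) x
        = expAdNeg φ (dX A) i x * expAdNeg φ (dP B) (n - i) x
          + pd 0 (pd 0 φ) x * expAdNeg φ (dP A) i x * expAdNeg φ (dP B) (n - i) x := by
      intro i
      ring
    refine (tsum_congr h).trans ?_
    exact Summable.tsum_add
      (mul_summable (bdd_expAdNeg φ (show Bdd (dX A) ma from bdd_dT 0 hA)) (bdd_expAdNeg φ (bdd_dP hB)) n x)
      (mul_summable (show Bdd (fun n x => pd 0 (pd 0 φ) x * expAdNeg φ (dP A) n x) (ma - 1) from
        fun j hj y => by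
          show pd 0 (pd 0 φ) y * expAdNeg φ (dP A) j y = 0
          rw [bdd_expAdNeg φ (bdd_dP hA) hj y, mul_zero]) (bdd_expAdNeg φ (bdd_dP hB)) n x)
  rw [haddL]
  rw [mul_smulR (pd 0 (pd 0 φ)) (expAdNeg φ (dP A)) (expAdNeg φ (dP B)) n x,
    mul_smulL (pd 0 (pd 0 φ)) (expAdNeg φ (dP A)) (expAdNeg φ (dP B)) n x]
  rw [← expAdNeg_mul φ (bdd_dP hA) (show Bdd (dX B) mb from bdd_dT 0 hB) n x,
    ← expAdNeg_mul φ (show Bdd (dX A) ma from bdd_dT 0 hA) (bdd_dP hB) n x]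
  have hp : expAdNeg φ (pb A B) n x
      = expAdNeg φ (mul (dP A) (dX B)) n x - expAdNeg φ (mul (dX A) (dP B)) n x :=
    expAdNeg_sub φ (bdd_mul (bdd_dP hA) (show Bdd (dX B) mb from bdd_dT 0 hB))
      (bdd_mul (show Bdd (dX A) ma from bdd_dT 0 hA) (bdd_dP hB))
      (F := mul (dP A) (dX B)) (G := mul (dX A) (dP B)) n x
  rw [hp]
  ring

end DXE

-- ============ trunc / const / Pinv lemmas ============

section Trunc
variable [NeZero N] {A D F G H : Coeffs N} {m ma mf mg mh : ℤ} (φ : (Fin N → ℝ) → ℝ)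

lemma truncGe_apply (k : ℤ) (A : Coeffs N) (n : ℤ) (x : Fin N → ℝ) :
    truncGe k A n x = if k ≤ n then A n x else 0 := by
  unfold truncGe
  split <;> rfl

lemma truncLe_apply (k : ℤ) (A : Coeffs N) (n : ℤ) (x : Fin N → ℝ) :
    truncLe k A n x = if n ≤ k then A n x else 0 := by
  unfold truncLe
  split <;> rfl

lemma const_apply (g : (Fin N → ℝ) → ℝ) (n : ℤ) (x : Fin N → ℝ) :
    const g n x = if n = 0 then g x else 0 := by
  unfold const
  split <;> rfl

lemma bdd_truncGe (k : ℤ) (hA : Bdd A m) : Bdd (truncGe k A) m := by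
  intro n hn x
  rw [truncGe_apply]
  split
  · exact hA hn x
  · rfl

lemma bdd_truncLe (k : ℤ) (A : Coeffs N) : Bdd (truncLe k A) k := by
  intro n hn x
  rw [truncLe_apply, if_neg (by omega)]

lemma bdd_const (g : (Fin N → ℝ) → ℝ) : Bdd (const g) 0 := by
  intro n hn x
  rw [const_apply, if_neg (by omega)]

lemma bdd_Pinv (g : (Fin N → ℝ) → ℝ) : Bdd (Pinv g) (-1) := by
  intro n hn x
  show (if n = -1 then g x else 0) = 0
  rw [if_neg (by omega)]

lemma smooth_truncGe (k : ℤ) (sA : ∀ n : ℤ, ContDiff ℝ (⊤ : ℕ∞) (A n)) (n : ℤ) :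
    ContDiff ℝ (⊤ : ℕ∞) (truncGe k A n) := by
  unfold truncGe
  split
  · exact sA n
  · exact contDiff_const

lemma smooth_const {g : (Fin N → ℝ) → ℝ} (hg : ContDiff ℝ (⊤ : ℕ∞) g) (n : ℤ) :
    ContDiff ℝ (⊤ : ℕ∞) (const g n) := by
  unfold const
  split
  · exact hg
  · exact contDiff_const

lemma smooth_Pinv {g : (Fin N → ℝ) → ℝ} (hg : ContDiff ℝ (⊤ : ℕ∞) g) (n : ℤ) :
    ContDiff ℝ (⊤ : ℕ∞) (Pinv g n) := by
  by_cases h : n = -1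
  · have : Pinv g n = g := by
      funext y
      show (if n = -1 then g y else 0) = g y
      rw [if_pos h]
    rw [this]
    exact hg
  · have : Pinv g n = fun _ => (0:ℝ) := by
      funext y
      show (if n = -1 then g y else 0) = 0
      rw [if_neg h]
    rw [this]
    exact contDiff_const

lemma smooth_dP' (sA : ∀ n : ℤ, ContDiff ℝ (⊤ : ℕ∞) (A n)) (n : ℤ) : ContDiff ℝ (⊤ : ℕ∞) (dP A n) :=
  contDiff_const.mul (sA (n+1))

lemma smooth_mul (hA : Bdd A ma) (hB : Bdd B mf) (sA : ∀ n : ℤ, ContDiff ℝ (⊤ : ℕ∞) (A n))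
    (sB : ∀ n : ℤ, ContDiff ℝ (⊤ : ℕ∞) (B n)) (n : ℤ) : ContDiff ℝ (⊤ : ℕ∞) (mul A B n) := by
  have : mul A B n = fun x => ∑ i ∈ Finset.Icc (n - mf) ma, A i x * B (n - i) x := by
    funext x
    apply tsum_eq_sum
    intro i hi
    simp only [Finset.mem_Icc, not_and_or, not_le] at hi
    rcases hi with h | h
    · rw [hB (by omega) x, mul_zero]
    · rw [hA h x, zero_mul]
  rw [this]
  exact ContDiff.sum fun i _ => (sA i).mul (sB (n - i))

lemma smooth_pb (hA : Bdd A ma) (hB : Bdd B mf) (sA : ∀ n : ℤ, ContDiff ℝ (⊤ : ℕ∞) (A n))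
    (sB : ∀ n : ℤ, ContDiff ℝ (⊤ : ℕ∞) (B n)) (n : ℤ) : ContDiff ℝ (⊤ : ℕ∞) (pb A B n) := by
  have h1 : ContDiff ℝ (⊤ : ℕ∞) (mul (dP A) (dX B) n) :=
    smooth_mul (bdd_dP hA) (show Bdd (dX B) mf from bdd_dT 0 hB) (smooth_dP' sA)
      (fun j => contDiff_pd 0 (sB j)) n
  have h2 : ContDiff ℝ (⊤ : ℕ∞) (mul (dX A) (dP B) n) :=
    smooth_mul (show Bdd (dX A) ma from bdd_dT 0 hA) (bdd_dP hB)
      (fun j => contDiff_pd 0 (sA j)) (smooth_dP' sB) n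
  exact h1.sub h2

lemma bdd_pb (hF : Bdd F mf) (hG : Bdd G mg) : Bdd (pb F G) (mf + mg - 1) := by
  intro n hn x
  show mul (dP F) (dX G) n x - mul (dX F) (dP G) n x = 0
  rw [bdd_mul (bdd_dP hF) (show Bdd (dX G) mg from bdd_dT 0 hG) (by omega) x,
    bdd_mul (show Bdd (dX F) mf from bdd_dT 0 hF) (bdd_dP hG) (by omega) x, sub_zero]

lemma expAdNeg_comb3 (hF : Bdd F mf) (hG : Bdd G mg) (hH : Bdd H mh) (n : ℤ) (x : Fin N → ℝ) :
    expAdNeg φ (fun n x => F n x - G n x + H n x) n x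
      = expAdNeg φ F n x - expAdNeg φ G n x + expAdNeg φ H n x := by
  simp only [expAdNeg]
  have h : ∀ k : ℕ, (pd 0 φ x) ^ k / (Nat.factorial k : ℝ)
        * (dP^[k] (fun n x => F n x - G n x + H n x)) n x
      = ((pd 0 φ x) ^ k / (Nat.factorial k : ℝ) * (dP^[k] F) n x
          - (pd 0 φ x) ^ k / (Nat.factorial k : ℝ) * (dP^[k] G) n x)
        + (pd 0 φ x) ^ k / (Nat.factorial k : ℝ) * (dP^[k] H) n x := by
    intro k
    simp only [dP_iter]
    ring
  refine (tsum_congr h).trans ?_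
  rw [Summable.tsum_add ((summable_E_terms hF _ n x).sub (summable_E_terms hG _ n x))
    (summable_E_terms hH _ n x),
    Summable.tsum_sub (summable_E_terms hF _ n x) (summable_E_terms hG _ n x)]

lemma expAdNeg_split (hD : Bdd D m) (n : ℤ) (x : Fin N → ℝ) :
    expAdNeg φ D n x
      = expAdNeg φ (truncGe 0 D) n x + expAdNeg φ (truncLe (-1) D) n x := by
  have hdec : D = fun n x => truncGe 0 D n x + truncLe (-1) D n x := by
    funext j y
    rw [truncGe_apply, truncLe_apply]
    rcases le_or_gt 0 j with h | h
    · rw [if_pos h, if_neg (by omega), add_zero]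
    · rw [if_neg (by omega), if_pos (by omega), zero_add]
  conv_lhs => rw [hdec]
  exact expAdNeg_add φ (bdd_truncGe 0 hD) ((bdd_truncLe (-1) D).mono (by omega : (-1:ℤ) ≤ max m 0)) n x

lemma expAdNeg_const {g : (Fin N → ℝ) → ℝ} (n : ℤ) (x : Fin N → ℝ) :
    expAdNeg φ (const g) n x = const g n x := by
  rcases lt_trichotomy n 0 with h | h | h
  · rw [expAdNeg_nonneg_supp φ (fun j hj y => by rw [const_apply, if_neg (by omega)]) h x,
      const_apply, if_neg (by omega)]
  · subst h
    rw [const_apply, if_pos rfl]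
    simp only [expAdNeg]
    rw [tsum_eq_single 0 (fun k hk => by
      rw [dP_iter, const_apply, if_neg (by omega), mul_zero, mul_zero])]
    simp [const_apply]
  · rw [const_apply, if_neg (by omega)]
    simp only [expAdNeg]
    rw [tsum_congr (fun k => by
      rw [dP_iter, const_apply, if_neg (by omega), mul_zero, mul_zero])]
    exact tsum_zero

lemma mul_Pinv (F : Coeffs N) (g : (Fin N → ℝ) → ℝ) (n : ℤ) (x : Fin N → ℝ) :
    mul F (Pinv g) n x = F (n+1) x * g x := by
  simp only [mul]
  rw [tsum_eq_single (n+1) (fun i hi => by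
    show F i x * (if n - i = -1 then g x else 0) = 0
    rw [if_neg (by omega), mul_zero])]
  show F (n+1) x * (if n - (n+1) = -1 then g x else 0) = _
  rw [if_pos (by omega)]

lemma dP_Pinv_val (g : (Fin N → ℝ) → ℝ) (n : ℤ) (x : Fin N → ℝ) :
    dP (Pinv g) n x = if n = -2 then -(g x) else 0 := by
  show ((n+1:ℤ):ℝ) * (if n + 1 = -1 then g x else 0) = _
  by_cases h : n = -2
  · rw [if_pos (by omega), if_pos h, h]
    norm_num
  · rw [if_neg (by omega), mul_zero, if_neg h]

lemma mul_dP_Pinv (F : Coeffs N) (g : (Fin N → ℝ) → ℝ) (n : ℤ) (x : Fin N → ℝ) :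
    mul F (dP (Pinv g)) n x = F (n+2) x * (-(g x)) := by
  simp only [mul]
  rw [tsum_eq_single (n+2) (fun i hi => by
    rw [dP_Pinv_val, if_neg (by omega), mul_zero])]
  rw [dP_Pinv_val, if_pos (by omega)]

lemma dX_Pinv (g : (Fin N → ℝ) → ℝ) : dX (Pinv g) = Pinv (pd 0 g) := by
  funext j
  show pd 0 (Pinv g j) = Pinv (pd 0 g) j
  by_cases h : j = -1
  · have h1 : Pinv g j = g := by
      funext y
      show (if j = -1 then g y else 0) = g y
      rw [if_pos h]
    have h2 : Pinv (pd 0 g) j = pd 0 g := by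
      funext y
      show (if j = -1 then pd 0 g y else 0) = pd 0 g y
      rw [if_pos h]
    rw [h1, h2]
  · have h1 : Pinv g j = fun _ => (0:ℝ) := by
      funext y
      show (if j = -1 then g y else 0) = 0
      rw [if_neg h]
    have h2 : Pinv (pd 0 g) j = fun _ => (0:ℝ) := by
      funext y
      show (if j = -1 then pd 0 g y else 0) = 0
      rw [if_neg h]
    rw [h1, h2, pd_const]

lemma pb_M_Pinv {M : Coeffs N} (mu1 : ∀ x, M 1 x = (1:ℝ))
    (mu2 : ∀ j : ℤ, 2 ≤ j → ∀ x, M j x = 0) (g : (Fin N → ℝ) → ℝ)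
    {n : ℤ} (hn : -1 ≤ n) (x : Fin N → ℝ) :
    pb M (Pinv g) n x = if n = -1 then pd 0 g x else 0 := by
  simp only [pb]
  rw [dX_Pinv g, mul_Pinv (dP M) (pd 0 g) n x, mul_dP_Pinv (dX M) g n x]
  have hdxM : dX M (n+2) x = 0 := by
    rcases eq_or_lt_of_le hn with h | h
    · have hM1 : M (n+2) = fun _ => (1:ℝ) := by
        rw [show n + 2 = 1 by omega]
        exact funext fun y => mu1 y
      show pd 0 (M (n+2)) x = 0
      rw [pd_congr 0 hM1, pd_const]
    · have hM : M (n+2) = fun _ => (0:ℝ) := funext fun y => mu2 (n+2) (by omega) y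
      show pd 0 (M (n+2)) x = 0
      rw [pd_congr 0 hM, pd_const]
  rw [hdxM, zero_mul, sub_zero]
  have hdPM : dP M (n+1) x = if n = -1 then 1 else 0 := by
    show ((n+1+1:ℤ):ℝ) * M (n+1+1) x = _
    by_cases h : n = -1
    · rw [if_pos h, show n+1+1 = 1 by omega]
      rw [mu1 x]
      norm_num [h]
    · rw [if_neg h, mu2 (n+1+1) (by omega) x, mul_zero]
  rw [hdPM]
  split_ifs
  · rw [one_mul]
  · rw [zero_mul]

lemma mulM_Pinv_hi {M : Coeffs N} (mu2 : ∀ j : ℤ, 2 ≤ j → ∀ x, M j x = 0)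
    (g : (Fin N → ℝ) → ℝ) {n : ℤ} (hn : 1 ≤ n) (x : Fin N → ℝ) :
    mul M (Pinv g) n x = 0 := by
  rw [mul_Pinv M g n x, mu2 (n+1) (by omega) x, zero_mul]

end Trunc


/-- Theorem 9, second structure: with `μ = e^{-ad φ}λ`,
`C = G′†A = e^{-ad φ}A + P⁻¹ρ` (`∂_X ρ = res{A,λ}`) and
`B = J⁽²⁾C = μ·{μ,C}_{≥-1} - {μ,(μC)_{≥1}}`, one has
`e^{ad φ}B + {(e^{-ad φ}(λA))₀, λ} = λ·{λ,A}_+ - {λ,(λA)_+} = Θ⁽²⁾(A)`. -/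
theorem statement13 {N : ℕ} [NeZero N] (lam : Coeffs N) (hshape : IsDKPShape lam)
    (hlam : IsLaurent lam)
    (φ : (Fin N → ℝ) → ℝ) (hφ : ContDiff ℝ (⊤ : ℕ∞) φ)
    (A : Coeffs N) (hA : IsLaurent A)
    (ρ : (Fin N → ℝ) → ℝ) (hρ : ContDiff ℝ (⊤ : ℕ∞) ρ) (hρX : pd 0 ρ = res (pb A lam))
    (C B : Coeffs N)
    (hC : C = fun n x => expAdNeg φ A n x + (if n = -1 then ρ x else 0))
    (hB : B = fun n x =>
        mul (expAdNeg φ lam) (truncGe (-1) (pb (expAdNeg φ lam) C)) n x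
          - pb (expAdNeg φ lam) (truncGe 1 (mul (expAdNeg φ lam) C)) n x) :
    (fun (n : ℤ) (x : Fin N → ℝ) =>
        expAdPos φ B n x + pb (const (expAdNeg φ (mul lam A) 0)) lam n x)
      = fun (n : ℤ) (x : Fin N → ℝ) =>
          mul lam (truncGe 0 (pb lam A)) n x - pb lam (truncGe 0 (mul lam A)) n x := by
  obtain ⟨h1lam, h0lam, h2lam⟩ := hshape
  obtain ⟨⟨mA, hmA⟩, sA⟩ := hA
  have bA : Bdd A mA := fun n hn x => congrFun (hmA n hn) x
  have blam : Bdd lam 1 := fun n hn x => congrFun (h2lam n (by omega)) x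
  have slam : ∀ n : ℤ, ContDiff ℝ (⊤ : ℕ∞) (lam n) := hlam.2
  have mu1 : ∀ x, expAdNeg φ lam 1 x = 1 := by
    intro x
    simp only [expAdNeg]
    rw [tsum_eq_single 0 (fun k hk => by
      rw [dP_iter, congrFun (h2lam (1 + k) (by omega)) x]
      simp)]
    simp [congrFun h1lam x]
  have mu2 : ∀ j : ℤ, 2 ≤ j → ∀ x, expAdNeg φ lam j x = 0 :=
    fun j hj x => bdd_expAdNeg φ blam (by omega) x
  have bμ : Bdd (expAdNeg φ lam) 1 := bdd_expAdNeg φ blam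
  have bPA : Bdd (pb lam A) (1 + mA - 1) := bdd_pb blam bA
  have sPA : ∀ n, ContDiff ℝ (⊤ : ℕ∞) (pb lam A n) := smooth_pb blam bA slam sA
  have bLA : Bdd (mul lam A) (1 + mA) := bdd_mul blam bA
  have sLA : ∀ n, ContDiff ℝ (⊤ : ℕ∞) (mul lam A n) := smooth_mul blam bA slam sA
  have btG0PA : Bdd (truncGe 0 (pb lam A)) (1 + mA - 1) := bdd_truncGe 0 bPA
  have stG0PA : ∀ n, ContDiff ℝ (⊤ : ℕ∞) (truncGe 0 (pb lam A) n) := smooth_truncGe 0 sPA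
  have btG0LA : Bdd (truncGe 0 (mul lam A)) (1 + mA) := bdd_truncGe 0 bLA
  have stG0LA : ∀ n, ContDiff ℝ (⊤ : ℕ∞) (truncGe 0 (mul lam A) n) := smooth_truncGe 0 sLA
  have sc0 : ContDiff ℝ (⊤ : ℕ∞) (expAdNeg φ (mul lam A) 0) := smooth_expAdNeg φ bLA sLA hφ 0
  have bconst : Bdd (const (expAdNeg φ (mul lam A) 0)) 0 := bdd_const _
  have sconst : ∀ n, ContDiff ℝ (⊤ : ℕ∞) (const (expAdNeg φ (mul lam A) 0) n) := smooth_const sc0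
  have bPinv : Bdd (Pinv ρ) (-1) := bdd_Pinv ρ
  have sPinv : ∀ n, ContDiff ℝ (⊤ : ℕ∞) (Pinv ρ n) := smooth_Pinv hρ
  have hC' : C = fun n x => expAdNeg φ A n x + Pinv ρ n x := hC
  have suppL : ∀ j : ℤ, 0 ≤ j → ∀ y, truncLe (-1) (pb lam A) j y = 0 :=
    fun j hj y => by rw [truncLe_apply, if_neg (by omega)]
  have suppG : ∀ j : ℤ, j < 0 → ∀ y, truncGe 0 (pb lam A) j y = 0 :=
    fun j hj y => by rw [truncGe_apply, if_neg (by omega)]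
  have suppGLA : ∀ j : ℤ, j < 0 → ∀ y, truncGe 0 (mul lam A) j y = 0 :=
    fun j hj y => by rw [truncGe_apply, if_neg (by omega)]
  have suppLLA : ∀ j : ℤ, 0 ≤ j → ∀ y, truncLe (-1) (mul lam A) j y = 0 :=
    fun j hj y => by rw [truncLe_apply, if_neg (by omega)]
  have h_pbC : ∀ n x, pb (expAdNeg φ lam) C n x
      = expAdNeg φ (pb lam A) n x + pb (expAdNeg φ lam) (Pinv ρ) n x := by
    intro n x
    rw [hC']
    rw [pb_addR bμ (bdd_expAdNeg φ bA) bPinv (smooth_expAdNeg φ bA sA hφ) sPinv n x]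
    rw [pb_expAdNeg φ blam bA slam sA hφ n x]
  have h1 : truncGe (-1) (pb (expAdNeg φ lam) C) = expAdNeg φ (truncGe 0 (pb lam A)) := by
    funext n x
    rw [truncGe_apply]
    by_cases hn : (-1:ℤ) ≤ n
    · rw [if_pos hn, h_pbC n x, expAdNeg_split φ bPA n x, pb_M_Pinv mu1 mu2 ρ hn x]
      by_cases h : n = -1
      · subst h
        rw [(expAdNeg_neg_supp φ suppL).2 x, if_pos rfl]
        have hrho : pd 0 ρ x = - pb lam A (-1) x := by
          rw [congrFun hρX x]
          show pb A lam (-1) x = _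
          rw [pb_antisymm A lam (-1) x]
        rw [hrho, truncLe_apply, if_pos (by omega)]
        ring
      · have hn0 : (0:ℤ) ≤ n := by omega
        rw [(expAdNeg_neg_supp φ suppL).1 n hn0 x, if_neg h]
        ring
    · rw [if_neg hn]
      exact (expAdNeg_nonneg_supp φ suppG (by omega) x).symm
  have h2 : truncGe 1 (mul (expAdNeg φ lam) C)
      = fun n x => expAdNeg φ (truncGe 0 (mul lam A)) n x
          - const (expAdNeg φ (mul lam A) 0) n x := by
    funext n x
    have hmulC : mul (expAdNeg φ lam) C n x
        = expAdNeg φ (mul lam A) n x + mul (expAdNeg φ lam) (Pinv ρ) n x := by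
      rw [hC', mul_addR bμ (bdd_expAdNeg φ bA) bPinv n x, ← expAdNeg_mul φ blam bA n x]
    rw [truncGe_apply]
    show _ = expAdNeg φ (truncGe 0 (mul lam A)) n x - const (expAdNeg φ (mul lam A) 0) n x
    rw [const_apply]
    by_cases hn1 : (1:ℤ) ≤ n
    · rw [if_pos hn1, hmulC, mulM_Pinv_hi mu2 ρ hn1 x, add_zero,
        expAdNeg_split φ bLA n x, (expAdNeg_neg_supp φ suppLLA).1 n (by omega) x,
        if_neg (by omega)]
      ring
    · rw [if_neg hn1]
      by_cases hn0 : n = 0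
      · subst hn0
        rw [if_pos rfl, expAdNeg_split φ bLA 0 x, (expAdNeg_neg_supp φ suppLLA).1 0 le_rfl x]
        ring
      · rw [if_neg hn0, expAdNeg_nonneg_supp φ suppGLA (by omega) x]
        ring
  have h3 : ∀ n x, pb (expAdNeg φ lam) (truncGe 1 (mul (expAdNeg φ lam) C)) n x
      = expAdNeg φ (pb lam (truncGe 0 (mul lam A))) n x
        - expAdNeg φ (pb lam (const (expAdNeg φ (mul lam A) 0))) n x := by
    intro n x
    rw [h2]
    rw [pb_subR bμ (bdd_expAdNeg φ btG0LA) bconst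
      (smooth_expAdNeg φ btG0LA stG0LA hφ) sconst n x]
    congr 1
    · exact pb_expAdNeg φ blam btG0LA slam stG0LA hφ n x
    · have hEc : expAdNeg φ (const (expAdNeg φ (mul lam A) 0))
          = const (expAdNeg φ (mul lam A) 0) :=
        funext fun j => funext fun y => expAdNeg_const φ j y
      conv_lhs => rw [← hEc]
      exact pb_expAdNeg φ blam bconst slam sconst hφ n x
  have hBrw : B = expAdNeg φ (fun n x => mul lam (truncGe 0 (pb lam A)) n x
      - pb lam (truncGe 0 (mul lam A)) n x
      + pb lam (const (expAdNeg φ (mul lam A) 0)) n x) := by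
    rw [hB, h1]
    funext n x
    rw [h3 n x, ← expAdNeg_mul φ blam btG0PA n x,
      expAdNeg_comb3 φ (bdd_mul blam btG0PA) (bdd_pb blam btG0LA) (bdd_pb blam bconst) n x]
    ring
  have bGG : Bdd (fun n x => mul lam (truncGe 0 (pb lam A)) n x
      - pb lam (truncGe 0 (mul lam A)) n x
      + pb lam (const (expAdNeg φ (mul lam A) 0)) n x) (max (1 + mA + 1) 1) := by
    intro j hj y
    show mul lam (truncGe 0 (pb lam A)) j y - pb lam (truncGe 0 (mul lam A)) j y
        + pb lam (const (expAdNeg φ (mul lam A) 0)) j y = 0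
    rw [bdd_mul blam btG0PA (by omega) y, bdd_pb blam btG0LA (by omega) y,
      bdd_pb blam bconst (by omega) y]
    ring
  funext n x
  show expAdPos φ B n x + pb (const (expAdNeg φ (mul lam A) 0)) lam n x = _
  rw [hBrw, expAdPos_expAdNeg φ bGG n x]
  show mul lam (truncGe 0 (pb lam A)) n x - pb lam (truncGe 0 (mul lam A)) n x
      + pb lam (const (expAdNeg φ (mul lam A) 0)) n x
      + pb (const (expAdNeg φ (mul lam A) 0)) lam n x = _
  rw [pb_antisymm (const (expAdNeg φ (mul lam A) 0)) lam n x]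
  ring

end DMKP
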